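/- arXiv:2309.16291 — 7 statements merged into one kernel-verified Lean document; each statement's English description precedes it below -/
import Mathlib

section
/- Let A ≥ 1 and K be natural numbers. For every adaptive K-query strategy (q, G) on A arms, the set of arms i* ∈ Fin A on which the strategy succeeds (i.e., its output when run on the reward function f_{i*} equals i*) has cardinality at most K + 1. -/
/-- The transcript of an adaptive query strategy `q` run against reward
function `f` for a given number of steps:
`t₀ = []`, `t_{j+1} = t_j ++ [f (q t_j)]`. -/
def transcript (A : ℕ) (q : List Bool → Fin A) (f : Fin A → Bool) : ℕ → List Bool
  | 0 => []
  | j + 1 => transcript A q f j ++ [f (q (transcript A q f j))]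

/-- The adaptive `K`-query strategy `(q, G)` banditSucceeds on the arm `i` if its
output when run on the reward function `f_i = fun j => decide (j = i)`
equals `i`. -/
def banditSucceeds (A K : ℕ) (q G : List Bool → Fin A) (i : Fin A) : Prop :=
  G (transcript A q (fun j => decide (j = i)) K) = i

/-!
Along the all-zero run the strategy queries at most `K` arms and then guesses one arm. If `i`
is none of these `K + 1` arms, the reward function `f_i` vanishes on every arm the all-zero run
queries, so the run on `f_i` is the all-zero run and its guess is not `i`.
-/

section

variable {A K : ℕ} {q G : List Bool → Fin A}

theorem transcript_congr {f g : Fin A → Bool} {m : ℕ}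
    (h : ∀ j < m, f (q (transcript A q g j)) = g (q (transcript A q g j))) :
    transcript A q f m = transcript A q g m := by
  induction m with
  | zero => rfl
  | succ n ih =>
    have hn : transcript A q f n = transcript A q g n := ih fun j hj => h j (by omega)
    rw [transcript, transcript, hn, h n n.lt_succ_self]

def zeroRunArms (A K : ℕ) (q G : List Bool → Fin A) : Finset (Fin A) :=
  insert (G (transcript A q (fun _ => false) K))
    ((Finset.range K).image fun j => q (transcript A q (fun _ => false) j))

theorem card_zeroRunArms_le : (zeroRunArms A K q G).card ≤ K + 1 :=
  (Finset.card_insert_le _ _).trans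
    (Nat.add_le_add_right ((Finset.card_image_le).trans (Finset.card_range K).le) 1)

theorem mem_zeroRunArms_of_banditSucceeds {i : Fin A} (h : banditSucceeds A K q G i) :
    i ∈ zeroRunArms A K q G := by
  by_contra hi
  simp only [zeroRunArms, Finset.mem_insert, Finset.mem_image, Finset.mem_range,
    not_or, not_exists, not_and] at hi
  obtain ⟨hguess, hquery⟩ := hi
  have hrun : transcript A q (fun j => decide (j = i)) K = transcript A q (fun _ => false) K :=
    transcript_congr fun j hj => decide_eq_false (hquery j hj)
  exact hguess (Eq.symm (hrun ▸ h))

end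

theorem stmt_0_general (A K : ℕ) (q G : List Bool → Fin A) :
    {i : Fin A | banditSucceeds A K q G i}.ncard ≤ K + 1 :=
  calc {i : Fin A | banditSucceeds A K q G i}.ncard
      ≤ (zeroRunArms A K q G : Set (Fin A)).ncard :=
        Set.ncard_le_ncard (fun _ => mem_zeroRunArms_of_banditSucceeds) (Finset.finite_toSet _)
    _ = (zeroRunArms A K q G).card := Set.ncard_coe_finset _
    _ ≤ K + 1 := card_zeroRunArms_le

/-- for every adaptive `K`-query strategy on `A ≥ 1` arms, the set
of arms on which the strategy banditSucceeds has cardinality at most `K + 1`. -/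
theorem stmt_0 (A K : ℕ) (hA : 1 ≤ A) (q G : List Bool → Fin A) :
    {i : Fin A | banditSucceeds A K q G i}.ncard ≤ K + 1 :=
  stmt_0_general A K q G
end

section
/- Let A ≥ 1 and K be natural numbers. Let ι be a type, ρ a probability mass function on ι, and for each r ∈ ι let (q_r, G_r) be an adaptive K-query strategy on A arms. Then there exists i* ∈ Fin A such that the ρ-probability of the event {r ∈ ι | the strategy (q_r, G_r) succeeds on i*} is at most (K + 1)/A; equivalently, the probability that the randomized strategy fails to identify i* is at least 1 - (K + 1)/A. -/
lemma transcript_eq_of_not_queried (A K : ℕ) (q : List Bool → Fin A) (i : Fin A)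
    (h : ∀ j < K, q (transcript A q (fun _ => false) j) ≠ i) :
    transcript A q (fun j => decide (j = i)) K = transcript A q (fun _ => false) K := by
  induction K with
  | zero => rfl
  | succ n ih =>
    have h' : ∀ j < n, q (transcript A q (fun _ => false) j) ≠ i :=
      fun j hj => h j (Nat.lt_succ_of_lt hj)
    have he := ih h'
    simp only [transcript, he]
    congr 1
    simp [h n (Nat.lt_succ_self n)]

open Classical in
lemma card_succeeds_le (A K : ℕ) (q G : List Bool → Fin A) :
    (Finset.univ.filter (fun i => banditSucceeds A K q G i)).card ≤ K + 1 := by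
  classical
  set t := transcript A q (fun _ => false) with ht
  have hsub : Finset.univ.filter (fun i => banditSucceeds A K q G i) ⊆
      ((Finset.range K).image (fun j => q (t j))) ∪ {G (t K)} := by
    intro i hi
    simp only [Finset.mem_filter] at hi
    by_cases hq : ∃ j < K, q (t j) = i
    · obtain ⟨j, hj, hqe⟩ := hq
      exact Finset.mem_union_left _ (Finset.mem_image.mpr ⟨j, Finset.mem_range.mpr hj, hqe⟩)
    · push_neg at hq
      have heq := transcript_eq_of_not_queried A K q i hq
      have hGi : G (t K) = i := by
        rw [ht, ← heq]; exact hi.2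
      exact Finset.mem_union_right _ (by simp [hGi])
  calc (Finset.univ.filter (fun i => banditSucceeds A K q G i)).card
      ≤ (((Finset.range K).image (fun j => q (t j))) ∪ {G (t K)}).card :=
        Finset.card_le_card hsub
    _ ≤ ((Finset.range K).image (fun j => q (t j))).card + ({G (t K)} : Finset (Fin A)).card :=
        Finset.card_union_le _ _
    _ ≤ K + 1 := by
        have h1 : ((Finset.range K).image (fun j => q (t j))).card ≤ K := by
          simpa using Finset.card_image_le (s := Finset.range K) (f := fun j => q (t j))
        simpa using Nat.add_le_add h1 (le_refl 1)

/-- for any randomized adaptive `K`-query strategy on `A ≥ 1` arms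
(a PMF `ρ` on an index type `ι` together with a deterministic strategy
`(q r, G r)` for each `r : ι`), there is an arm `i` such that the probability
of success on `i` is at most `(K + 1) / A`; equivalently, the probability of
failure on `i` is at least `1 - (K + 1) / A`. -/
theorem stmt_2 (A K : ℕ) (hA : 1 ≤ A) (ι : Type*) (ρ : PMF ι)
    (q G : ι → List Bool → Fin A) :
    ∃ i : Fin A,
      ρ.toOuterMeasure {r : ι | banditSucceeds A K (q r) (G r) i} ≤
        ((K : ENNReal) + 1) / (A : ENNReal) ∧
      (1 : ENNReal) - ((K : ENNReal) + 1) / (A : ENNReal) ≤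
        ρ.toOuterMeasure {r : ι | ¬ banditSucceeds A K (q r) (G r) i} := by
  classical
  set μ : Fin A → ENNReal :=
    fun i => ρ.toOuterMeasure {r : ι | banditSucceeds A K (q r) (G r) i} with hμ
  have hsum : ∑ i : Fin A, μ i ≤ (K : ENNReal) + 1 := by
    have hμeq : ∀ i, μ i = ∑' r, if banditSucceeds A K (q r) (G r) i then ρ r else 0 := by
      intro i
      simp only [hμ]
      rw [PMF.toOuterMeasure_apply]
      apply tsum_congr; intro r
      by_cases h : banditSucceeds A K (q r) (G r) i <;> simp [Set.indicator_apply, h]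
    calc ∑ i : Fin A, μ i
        = ∑' r, ∑ i : Fin A, (if banditSucceeds A K (q r) (G r) i then ρ r else 0) := by
          simp_rw [hμeq]
          exact (Summable.tsum_finsetSum (fun i _ => ENNReal.summable)).symm
      _ ≤ ∑' r, ((K : ENNReal) + 1) * ρ r := by
          apply ENNReal.tsum_le_tsum
          intro r
          rw [← Finset.sum_filter, Finset.sum_const, nsmul_eq_mul]
          apply mul_le_mul_left
          have := card_succeeds_le A K (q r) (G r)
          calc ((Finset.univ.filter (fun i => banditSucceeds A K (q r) (G r) i)).card : ENNReal)
              ≤ ((K + 1 : ℕ) : ENNReal) := by exact_mod_cast this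
            _ = (K : ENNReal) + 1 := by push_cast; ring
      _ = (K : ENNReal) + 1 := by
          rw [ENNReal.tsum_mul_left, PMF.tsum_coe, mul_one]
  have hAne : (A : ENNReal) ≠ 0 := by
    exact Nat.cast_ne_zero.mpr (by omega)
  have hAne' : (A : ENNReal) ≠ ⊤ := ENNReal.natCast_ne_top A
  obtain ⟨i, -, hmin⟩ := Finset.exists_min_image Finset.univ μ
    ⟨⟨0, hA⟩, Finset.mem_univ _⟩
  have hcard : (A : ENNReal) * μ i ≤ ∑ j : Fin A, μ j := by
    calc (A : ENNReal) * μ i = ∑ _j : Fin A, μ i := by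
          rw [Finset.sum_const, nsmul_eq_mul]; simp
      _ ≤ ∑ j : Fin A, μ j := Finset.sum_le_sum (fun j hj => hmin j hj)
  have hle : μ i ≤ ((K : ENNReal) + 1) / (A : ENNReal) := by
    rw [ENNReal.le_div_iff_mul_le (Or.inl hAne) (Or.inl hAne')]
    calc μ i * (A : ENNReal) = (A : ENNReal) * μ i := mul_comm _ _
      _ ≤ ∑ j : Fin A, μ j := hcard
      _ ≤ (K : ENNReal) + 1 := hsum
  refine ⟨i, hle, ?_⟩
  have hcompl : (1 : ENNReal) ≤ μ i +
      ρ.toOuterMeasure {r : ι | ¬ banditSucceeds A K (q r) (G r) i} := by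
    have huniv : ρ.toOuterMeasure (Set.univ : Set ι) = 1 := by
      rw [PMF.toOuterMeasure_apply]
      simp only [Set.indicator_univ]
      exact ρ.tsum_coe
    have hset : {r : ι | ¬ banditSucceeds A K (q r) (G r) i}
        = {r : ι | banditSucceeds A K (q r) (G r) i}ᶜ := rfl
    calc (1 : ENNReal) = ρ.toOuterMeasure (Set.univ : Set ι) := huniv.symm
      _ = ρ.toOuterMeasure ({r : ι | banditSucceeds A K (q r) (G r) i} ∪
            {r : ι | banditSucceeds A K (q r) (G r) i}ᶜ) := by
          rw [Set.union_compl_self]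
      _ ≤ μ i + ρ.toOuterMeasure {r : ι | ¬ banditSucceeds A K (q r) (G r) i} := by
          rw [hset]
          exact MeasureTheory.measure_union_le _ _
  calc (1 : ENNReal) - ((K : ENNReal) + 1) / (A : ENNReal)
      ≤ (μ i + ρ.toOuterMeasure {r : ι | ¬ banditSucceeds A K (q r) (G r) i})
          - μ i := by
        apply tsub_le_tsub hcompl hle
    _ ≤ ρ.toOuterMeasure {r : ι | ¬ banditSucceeds A K (q r) (G r) i} := by
        rw [tsub_le_iff_right, add_comm]
end

section
/- Let n ∈ ℕ, X a type, and f : (Fin n → ℝ) → List ((Fin n → ℝ) × X) → ℝ a permutation-symmetric function, i.e., f s l = f (p_σ s) (l.map (fun (u, x) => (p_σ u, x))) for every permutation σ of Fin n, every s, and every list l. Let S be a finite set of coordinates (S : Finset (Fin n)) and l a list of pairs in (Fin n → ℝ) × X such that for every (u, x) in l and every i ∈ S, u i = 0. If w, z : Fin n → ℝ take values in {0,1}, their supports {i | w i ≠ 0} and {i | z i ≠ 0} are contained in S and have the same cardinality, then f z l = f w l. -/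
/-- The coordinate permutation induced by `σ : Equiv.Perm (Fin n)`:
`(pcoord n σ x) (σ i) = x i`, i.e., `pcoord n σ x = x ∘ σ⁻¹`. -/
def pcoord (n : ℕ) (σ : Equiv.Perm (Fin n)) (x : Fin n → ℝ) : Fin n → ℝ :=
  x ∘ σ.symm

/-! Two `{0,1}`-valued states with supports of equal size inside `S` differ by a permutation of
the coordinates that moves only coordinates in `S`. Every dataset state vanishes on `S`, so this
permutation leaves the dataset unchanged, and the symmetry of `f` gives `f z l = f w l`. -/

open Finset

namespace Equiv.Perm

variable {α : Type*}

theorem exists_mem_iff_of_subset_of_card_eq [DecidableEq α] {S s t : Finset α}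
    (hs : s ⊆ S) (ht : t ⊆ S) (hst : #s = #t) :
    ∃ σ : Perm α, (∀ i ∉ S, σ i = i) ∧ ∀ i, σ i ∈ t ↔ i ∈ s := by
  have hcard : #(s.subtype (· ∈ S)) = #(t.subtype (· ∈ S)) := by
    rwa [card_subtype, card_subtype, filter_true_of_mem hs, filter_true_of_mem ht]
  obtain ⟨τ, hτ⟩ := exists_map_finset_eq _ _ hcard
  refine ⟨ofSubtype τ, fun i hi => ofSubtype_apply_of_not_mem τ hi, fun i => ?_⟩
  by_cases hi : i ∈ S
  · rw [ofSubtype_apply_of_mem τ hi, ← mem_subtype (p := (· ∈ S)), ← hτ, mem_map_equiv,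
      symm_apply_apply, mem_subtype]
  · rw [ofSubtype_apply_of_not_mem τ hi]
    exact iff_of_false (fun h => hi (ht h)) (fun h => hi (hs h))

theorem comp_symm_eq_self {M : Type*} [Zero M] {S : Set α} {σ : Perm α}
    (hσ : ∀ i ∉ S, σ i = i) {u : α → M} (hu : ∀ i ∈ S, u i = 0) : u ∘ σ.symm = u := by
  funext i
  by_cases hi : i ∈ S
  · have hσi : σ.symm i ∈ S := by
      by_contra h
      have h' := hσ _ h
      rw [apply_symm_apply] at h'
      exact h (h' ▸ hi)
    simp only [Function.comp_apply, hu _ hi, hu _ hσi]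
  · simp only [Function.comp_apply, σ.symm_apply_eq.mpr (hσ i hi).symm]

end Equiv.Perm

theorem Function.eq_of_support_eq_of_forall_eq_zero_or_eq_one {α M : Type*} [Zero M] [One M]
    {w z : α → M} (hw : ∀ i, w i = 0 ∨ w i = 1) (hz : ∀ i, z i = 0 ∨ z i = 1)
    (h : support w = support z) : w = z := by
  funext i
  have hi : w i ≠ 0 ↔ z i ≠ 0 := Set.ext_iff.mp h i
  by_cases hwi : w i = 0
  · rw [hwi, not_ne_iff.mp fun hzi => hi.mpr hzi hwi]
  · rw [(hw i).resolve_left hwi, (hz i).resolve_left (hi.mp hwi)]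

theorem map_pcoord_eq_self {n : ℕ} {X : Type*} {S : Finset (Fin n)} {σ : Equiv.Perm (Fin n)}
    (hσ : ∀ i ∉ S, σ i = i) {l : List ((Fin n → ℝ) × X)} (hl : ∀ p ∈ l, ∀ i ∈ S, p.1 i = 0) :
    l.map (fun p => (pcoord n σ p.1, p.2)) = l := by
  refine (List.map_congr_left fun p hp => ?_).trans (List.map_id l)
  exact Prod.ext (Equiv.Perm.comp_symm_eq_self (S := (S : Set (Fin n))) hσ (hl p hp)) rfl

/-- a function `f` of a state and a dataset that is symmetric
under simultaneous coordinate permutations assigns the same value to any two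
`{0,1}`-valued states whose supports lie in a coordinate set `S`, on which all
dataset states vanish, and have the same cardinality. -/
theorem stmt_6 (n : ℕ) (X : Type*)
    (f : (Fin n → ℝ) → List ((Fin n → ℝ) × X) → ℝ)
    (hsym : ∀ (σ : Equiv.Perm (Fin n)) (s : Fin n → ℝ)
      (l : List ((Fin n → ℝ) × X)),
      f s l = f (pcoord n σ s) (l.map fun p => (pcoord n σ p.1, p.2)))
    (S : Finset (Fin n)) (l : List ((Fin n → ℝ) × X))
    (hl : ∀ p ∈ l, ∀ i ∈ S, p.1 i = 0)
    (w z : Fin n → ℝ)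
    (hw : ∀ i, w i = 0 ∨ w i = 1) (hz : ∀ i, z i = 0 ∨ z i = 1)
    (hwS : {i | w i ≠ 0} ⊆ (S : Set (Fin n)))
    (hzS : {i | z i ≠ 0} ⊆ (S : Set (Fin n)))
    (hcard : {i | w i ≠ 0}.ncard = {i | z i ≠ 0}.ncard) :
    f z l = f w l := by
  classical
  have hsupp (v : Fin n → ℝ) : {i | v i ≠ 0} = ↑(univ.filter (v · ≠ 0)) := by simp
  rw [hsupp w, hsupp z, Set.ncard_coe_finset, Set.ncard_coe_finset] at hcard
  rw [hsupp, coe_subset] at hwS hzS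
  obtain ⟨σ, hσS, hσst⟩ := Equiv.Perm.exists_mem_iff_of_subset_of_card_eq hwS hzS hcard
  have hwz : pcoord n σ w = z := by
    refine Function.eq_of_support_eq_of_forall_eq_zero_or_eq_one (fun i => hw _) hz <| Set.ext fun i => ?_
    simpa [pcoord] using (hσst (σ.symm i)).symm
  calc f z l = f (pcoord n σ w) (l.map fun p => (pcoord n σ p.1, p.2)) := by
        rw [hwz, map_pcoord_eq_self hσS hl]
    _ = f w l := (hsym σ w l).symm
end

section
/- Let 𝒳 be a type, r ≥ 1 and d ≥ 1 natural numbers, and H₁, …, H_r hypothesis classes on 𝒳, each of VC dimension at most d. Then every finite subset of 𝒳 shattered by the union H₁ ∪ ⋯ ∪ H_r has cardinality at most 4·d·log(2·d) + 2·log r (natural logarithm, with naturals coerced to ℝ); i.e., the VC dimension of the union is at most 4d·log(2d) + 2·log r. -/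
/-!
By the Sauer–Shelah lemma each class realizes at most `∑_{k ≤ d} C(m, k) ≤ (2m)^d` of the `2^m`
labelings of an `m`-point set, so a set of size `m` shattered by the union satisfies
`2^m ≤ r (2m)^d`, i.e. `m log 2 ≤ log r + d log (2m)`. The tangent-line bound `log x ≤ x / e` at
`x = m / (2d)` turns `d log (2m)` into `m / (2e) + 2d log (2d)`, and `log 2 - 1 / (2e) > 1 / 2`.
-/

def Shatters {𝒳 : Type*} (H : Set (𝒳 → Bool)) (S : Finset 𝒳) : Prop :=
  ∀ g : 𝒳 → Bool, ∃ h ∈ H, ∀ x ∈ S, h x = g x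

section

open Finset Real

variable {𝒳 : Type*}

open Classical in
/-- Subsets of `S` are encoded as `Finset S`, so that Mathlib's Sauer–Shelah lemma, which needs a
finite ground type, applies. -/
noncomputable def trace (H : Set (𝒳 → Bool)) (S : Finset 𝒳) : Finset (Finset S) :=
  univ.filter fun T => ∃ h ∈ H, ∀ x : S, h x = true ↔ x ∈ T

lemma mem_trace {H : Set (𝒳 → Bool)} {S : Finset 𝒳} {T : Finset S} :
    T ∈ trace H S ↔ ∃ h ∈ H, ∀ x : S, h x = true ↔ x ∈ T := by
  simp [trace]

lemma shatters_map_subtype_of_shatters_trace [DecidableEq 𝒳] {H : Set (𝒳 → Bool)} {S : Finset 𝒳}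
    {s : Finset S} (hs : (trace H S).Shatters s) :
    Shatters H (s.map (Function.Embedding.subtype _)) := by
  intro g
  obtain ⟨T, hT, hsT⟩ := hs (filter_subset (fun x : S => g x) s)
  obtain ⟨h, hH, hhT⟩ := mem_trace.1 hT
  refine ⟨h, hH, ?_⟩
  simp only [mem_map, Function.Embedding.subtype_apply]
  rintro _ ⟨x, hx, rfl⟩
  have hxT : x ∈ T ↔ g x = true := by
    simpa [hx] using congrArg (x ∈ ·) hsT
  exact Bool.eq_iff_iff.2 ((hhT x).trans hxT)

lemma vcDim_trace_le [DecidableEq 𝒳] {H : Set (𝒳 → Bool)} {d : ℕ}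
    (hH : ∀ S : Finset 𝒳, Shatters H S → #S ≤ d) (S : Finset 𝒳) :
    (trace H S).vcDim ≤ d :=
  Finset.sup_le fun s hs => by
    simpa using hH _ (shatters_map_subtype_of_shatters_trace (mem_shatterer.1 hs))

lemma card_trace_le [DecidableEq 𝒳] {H : Set (𝒳 → Bool)} {d : ℕ}
    (hH : ∀ S : Finset 𝒳, Shatters H S → #S ≤ d) (S : Finset 𝒳) :
    #(trace H S) ≤ ∑ k ∈ Iic d, (#S).choose k := by
  calc #(trace H S) ≤ #(trace H S).shatterer := card_le_card_shatterer _
    _ ≤ ∑ k ∈ Iic (trace H S).vcDim, (Fintype.card S).choose k := card_shatterer_le_sum_vcDim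
    _ ≤ ∑ k ∈ Iic d, (#S).choose k := by
      rw [Fintype.card_coe]
      exact sum_le_sum_of_subset (Iic_subset_Iic.2 (vcDim_trace_le hH S))

lemma Shatters.univ_subset_biUnion_trace [DecidableEq 𝒳] {ι : Type*} [Fintype ι]
    {H : ι → Set (𝒳 → Bool)} {S : Finset 𝒳} (hS : Shatters (⋃ i, H i) S) :
    univ ⊆ univ.biUnion fun i => trace (H i) S := by
  intro T _
  obtain ⟨h, hh, hhS⟩ := hS fun x => x ∈ T.map (Function.Embedding.subtype _)
  obtain ⟨i, hi⟩ := Set.mem_iUnion.1 hh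
  exact mem_biUnion.2 ⟨i, mem_univ _, mem_trace.2 ⟨h, hi, fun x => by simp [hhS x x.2]⟩⟩

lemma two_pow_card_le_mul_sum_choose {ι : Type*} [Fintype ι] {H : ι → Set (𝒳 → Bool)} {d : ℕ}
    (hH : ∀ i, ∀ S : Finset 𝒳, Shatters (H i) S → #S ≤ d)
    {S : Finset 𝒳} (hS : Shatters (⋃ i, H i) S) :
    2 ^ #S ≤ Fintype.card ι * ∑ k ∈ Iic d, (#S).choose k := by
  classical
  calc 2 ^ #S = #(univ : Finset (Finset S)) := by
        rw [card_univ, Fintype.card_finset, Fintype.card_coe]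
    _ ≤ #(univ.biUnion fun i => trace (H i) S) := card_le_card hS.univ_subset_biUnion_trace
    _ ≤ ∑ i, #(trace (H i) S) := card_biUnion_le
    _ ≤ ∑ _i : ι, ∑ k ∈ Iic d, (#S).choose k := sum_le_sum fun i _ => card_trace_le (hH i) S
    _ = Fintype.card ι * ∑ k ∈ Iic d, (#S).choose k := by rw [sum_const, card_univ, smul_eq_mul]

lemma sum_Iic_choose_le_two_mul_pow {n : ℕ} (hn : 1 ≤ n) (d : ℕ) :
    ∑ k ∈ Iic d, n.choose k ≤ (2 * n) ^ d :=
  calc ∑ k ∈ Iic d, n.choose k ≤ ∑ _k ∈ Iic d, n ^ d :=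
        sum_le_sum fun k hk => (Nat.choose_le_pow n k).trans (Nat.pow_le_pow_right hn (mem_Iic.1 hk))
    _ = (d + 1) * n ^ d := by rw [sum_const, Nat.card_Iic, smul_eq_mul]
    _ ≤ 2 ^ d * n ^ d := Nat.mul_le_mul_right _ Nat.lt_two_pow_self
    _ = (2 * n) ^ d := (mul_pow 2 n d).symm

lemma Real.log_le_div_exp_one {x : ℝ} (hx : 0 < x) : log x ≤ x / exp 1 := by
  have h := log_le_sub_one_of_pos (div_pos hx (exp_pos 1))
  rw [log_div hx.ne' (exp_pos 1).ne', log_exp] at h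
  linarith

lemma natCast_mul_log_two_mul_le (d : ℕ) {m : ℝ} (hm : 0 < m) :
    d * log (2 * m) ≤ m / (2 * exp 1) + 2 * d * log (2 * d) := by
  rcases Nat.eq_zero_or_pos d with rfl | hd
  · simp only [CharP.cast_eq_zero, zero_mul]
    positivity
  have hD : (1 : ℝ) ≤ d := by exact_mod_cast hd
  have hlog : log (2 * m) ≤ m / (2 * d * exp 1) + 2 * log (2 * d) := by
    have h := log_le_div_exp_one (div_pos hm (by positivity : (0 : ℝ) < 2 * d))
    have h2 : log 2 ≤ log (2 * d) := log_le_log two_pos (by linarith)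
    rw [log_div hm.ne' (by positivity)] at h
    calc log (2 * m) = log 2 + log m := log_mul two_ne_zero hm.ne'
      _ ≤ m / (2 * d) / exp 1 + log 2 + log (2 * d) := by linarith
      _ ≤ m / (2 * d * exp 1) + 2 * log (2 * d) := by
        rw [div_div]
        linarith
  calc d * log (2 * m) ≤ d * (m / (2 * d * exp 1) + 2 * log (2 * d)) :=
        mul_le_mul_of_nonneg_left hlog (by positivity)
    _ = m / (2 * exp 1) + 2 * d * log (2 * d) := by field_simp

lemma half_add_inv_two_mul_exp_one_lt_log_two : 1 / 2 + 1 / (2 * exp 1) < log 2 := by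
  have he := exp_one_gt_d9
  have hl := log_two_gt_d9
  rw [div_add_div _ _ two_ne_zero (by positivity), div_lt_iff₀ (by positivity)]
  nlinarith

lemma le_of_two_pow_le_mul_sum_choose {r d m : ℕ} (h : 2 ^ m ≤ r * ∑ k ∈ Iic d, m.choose k) :
    (m : ℝ) ≤ 4 * d * log (2 * d) + 2 * log r := by
  rcases Nat.eq_zero_or_pos m with rfl | hm
  · have hlogd : 0 ≤ log (2 * d : ℝ) := by exact_mod_cast log_natCast_nonneg (2 * d)
    have hlogr : 0 ≤ log (r : ℝ) := log_natCast_nonneg r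
    simp only [CharP.cast_eq_zero]
    positivity
  have hpow : (2 : ℝ) ^ m ≤ r * (2 * m) ^ d := by
    exact_mod_cast h.trans (Nat.mul_le_mul_left r (sum_Iic_choose_le_two_mul_pow hm d))
  have hM : (0 : ℝ) < m := by exact_mod_cast hm
  have hr : (0 : ℝ) < r := by
    have : (0 : ℝ) < r * (2 * m) ^ d := lt_of_lt_of_le (by positivity) hpow
    exact pos_of_mul_pos_left this (by positivity)
  have hlog : m * log 2 ≤ log r + d * log (2 * m) := by
    have := log_le_log (by positivity) hpow
    rwa [log_pow, log_mul hr.ne' (by positivity), log_pow] at this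
  have hc : (m : ℝ) * (1 / 2 + 1 / (2 * exp 1)) ≤ m * log 2 :=
    mul_le_mul_of_nonneg_left half_add_inv_two_mul_exp_one_lt_log_two.le hM.le
  have hm_div : (m : ℝ) / (2 * exp 1) = m * (1 / (2 * exp 1)) := by ring
  linarith [natCast_mul_log_two_mul_le d hM]

end

theorem stmt_7_general (𝒳 : Type*) (r d : ℕ)
    (H : Fin r → Set (𝒳 → Bool))
    (hH : ∀ i, ∀ S : Finset 𝒳, Shatters (H i) S → S.card ≤ d) :
    ∀ S : Finset 𝒳, Shatters (⋃ i, H i) S →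
      (S.card : ℝ) ≤ 4 * d * Real.log (2 * d) + 2 * Real.log r := fun _ hS =>
  le_of_two_pow_le_mul_sum_choose (by simpa using two_pow_card_le_mul_sum_choose hH hS)

/-- Proposition A.1, VC-dimension of the union: if each of the
`r ≥ 1` hypothesis classes `H i` has VC dimension at most `d ≥ 1`, then every
finite set shattered by their union has cardinality at most
`4·d·log (2·d) + 2·log r`. -/
theorem stmt_7 (𝒳 : Type*) (r d : ℕ) (hr : 1 ≤ r) (hd : 1 ≤ d)
    (H : Fin r → Set (𝒳 → Bool))
    (hH : ∀ i, ∀ S : Finset 𝒳, Shatters (H i) S → S.card ≤ d) :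
    ∀ S : Finset 𝒳, Shatters (⋃ i, H i) S →
      (S.card : ℝ) ≤ 4 * d * Real.log (2 * d) + 2 * Real.log r :=
  stmt_7_general 𝒳 r d H hH
end

section
/- For every natural number n ≥ 1, the hypothesis class H_n = { fun x : Fin n → ℝ => decide (∑ i, w i * x i > 0) | w : Fin n → ℝ having at most one nonzero coordinate } on domain Fin n → ℝ satisfies: every finite subset of Fin n → ℝ shattered by H_n has cardinality at most 8·log 4 + 2·log n (natural logarithm, with n coerced to ℝ); i.e., the VC dimension of H_n is at most 8·log 4 + 2·log n. -/
private lemma numeric_bound (d n : ℕ) (hn : 1 ≤ n) (h : 2 ^ d ≤ 2 * n + 1) :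
    (d : ℝ) ≤ 8 * Real.log 4 + 2 * Real.log n := by
  have hn1 : (1 : ℝ) ≤ n := by exact_mod_cast hn
  have h1 : (2 : ℝ) ^ d ≤ 2 * n + 1 := by exact_mod_cast h
  have h2 : (2 : ℝ) * n + 1 ≤ 3 * n := by linarith
  have hlog : (d : ℝ) * Real.log 2 ≤ Real.log 3 + Real.log n := by
    have := Real.log_le_log (by positivity) (h1.trans h2)
    rw [Real.log_mul (by norm_num) (by linarith), Real.log_pow] at this
    exact_mod_cast this
  have h34 : Real.log 3 ≤ Real.log 4 := Real.log_le_log (by norm_num) (by norm_num)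
  have h4 : Real.log 4 = 2 * Real.log 2 := by
    rw [show (4:ℝ) = 2 ^ 2 by norm_num, Real.log_pow]; push_cast; ring
  have hLn : 0 ≤ Real.log n := Real.log_nonneg hn1
  have hL2 : (0.6931471803 : ℝ) < Real.log 2 := Real.log_two_gt_d9
  rw [h4]
  nlinarith [mul_nonneg hLn (sub_nonneg.mpr (show (1:ℝ) ≤ 2 * Real.log 2 by nlinarith)),
    sq_nonneg (Real.log 2), (Nat.cast_nonneg d : (0:ℝ) ≤ d)]

/-- for `n ≥ 1`, the class of linear threshold functions on
`Fin n → ℝ` whose weight vector has at most one nonzero coordinate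
(`‖w‖₀ ≤ 1`) has VC dimension at most `8·log 4 + 2·log n`: every shattered
finite set has cardinality at most this bound. -/
theorem stmt_10 (n : ℕ) (hn : 1 ≤ n) :
    ∀ S : Finset (Fin n → ℝ),
      Shatters {h : (Fin n → ℝ) → Bool |
        ∃ w : Fin n → ℝ, {i | w i ≠ 0}.Subsingleton ∧
          h = fun x => decide (∑ i, w i * x i > 0)} S →
      (S.card : ℝ) ≤ 8 * Real.log 4 + 2 * Real.log n := by
  classical
  intro S hS
  set φ : Option (Fin n × Bool) → ((Fin n → ℝ) → Bool) := fun a =>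
    match a with
    | none => fun _ => false
    | some (i, true) => fun x => decide (x i > 0)
    | some (i, false) => fun x => decide (x i < 0)
  -- every hypothesis in the class equals φ a for some a
  have key : ∀ h ∈ {h : (Fin n → ℝ) → Bool |
        ∃ w : Fin n → ℝ, {i | w i ≠ 0}.Subsingleton ∧
          h = fun x => decide (∑ i, w i * x i > 0)}, ∃ a, h = φ a := by
    rintro h ⟨w, hw, rfl⟩
    by_cases hz : ∀ i, w i = 0
    · refine ⟨none, ?_⟩
      funext x
      simp [φ, hz]
    · push_neg at hz
      obtain ⟨i, hi⟩ := hz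
      have hsum : ∀ x : Fin n → ℝ, ∑ j, w j * x j = w i * x i := by
        intro x
        refine Finset.sum_eq_single i (fun j _ hj => ?_) (by simp)
        have : w j = 0 := by
          by_contra hwj
          exact hj (hw hwj hi)
        simp [this]
      rcases lt_or_gt_of_ne hi with hneg | hpos
      · refine ⟨some (i, false), ?_⟩
        funext x
        simp only [φ, hsum x]
        rw [decide_eq_decide]
        constructor
        · intro hgt; nlinarith
        · intro hlt; nlinarith
      · refine ⟨some (i, true), ?_⟩
        funext x
        simp only [φ, hsum x]
        rw [decide_eq_decide]
        constructor
        · intro hgt; nlinarith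
        · intro hlt; nlinarith
  -- injection from labelings of S into Option (Fin n × Bool)
  have hinj : ∃ F : ({x // x ∈ S} → Bool) → Option (Fin n × Bool), Function.Injective F := by
    have choice : ∀ g : {x // x ∈ S} → Bool, ∃ a, ∀ x (hx : x ∈ S), φ a x = g ⟨x, hx⟩ := by
      intro g
      obtain ⟨h, hH, hag⟩ := hS (fun x => if hx : x ∈ S then g ⟨x, hx⟩ else false)
      obtain ⟨a, rfl⟩ := key h hH
      exact ⟨a, fun x hx => by simpa [hx] using hag x hx⟩
    refine ⟨fun g => Classical.choose (choice g), fun g₁ g₂ hfg => ?_⟩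
    funext x
    have h1 := Classical.choose_spec (choice g₁) x.1 x.2
    have h2 := Classical.choose_spec (choice g₂) x.1 x.2
    change Classical.choose (choice g₁) = Classical.choose (choice g₂) at hfg
    rw [hfg] at h1
    rw [← h1, h2]
  obtain ⟨F, hF⟩ := hinj
  have hcard : 2 ^ S.card ≤ 2 * n + 1 := by
    have := Fintype.card_le_of_injective F hF
    simpa [Fintype.card_coe, mul_comm] using this
  exact numeric_bound S.card n hn hcard
end

section
/- Let 𝒳 be a measurable space with measurable singletons, μ a probability measure on 𝒳, and let P₁ = μ ⊗ (uniform probability measure on Bool) on 𝒳 × Bool, so that under P₁ the label is uniform on Bool and independent of the input. Let P₂ be a probability measure on 𝒳 × Bool whose support is a finite nonempty set T of atoms, and let p_min = min_{(x,y) ∈ T} P₂ {(x, y)} > 0. Let P = (1/2)·P₁ + (1/2)·P₂. Then for every measurable h : 𝒳 → Bool: (a) L_P(h) = 1/4 + (1/2)·L_{P₂}(h); and (b) if L_P(h) < 1/4 + p_min/2 then h x = y for every (x, y) ∈ T. -/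
open MeasureTheory

/-- The risk of `h` under a measure `P` on `𝒳 × Bool`:
`L_P(h) = P {(x, y) | h x ≠ y}`. -/
noncomputable def risk {𝒳 : Type*} [MeasurableSpace 𝒳]
    (P : Measure (𝒳 × Bool)) (h : 𝒳 → Bool) : ℝ :=
  (P {p : 𝒳 × Bool | h p.1 ≠ p.2}).toReal

/-- let `P₁ = μ ⊗ uniform(Bool)` (uniform independent labels),
let `P₂` be a probability measure supported on a finite nonempty set `T` of
atoms with minimal atom mass `p_min`, and let `P = (1/2)·P₁ + (1/2)·P₂`.
Then for every measurable `h`: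
(a) `L_P(h) = 1/4 + (1/2)·L_{P₂}(h)`; and
(b) if `L_P(h) < 1/4 + p_min/2` then `h x = y` for every `(x, y) ∈ T`. -/
theorem stmt_11 (𝒳 : Type*) [MeasurableSpace 𝒳] [MeasurableSingletonClass 𝒳]
    (μ : Measure 𝒳) [IsProbabilityMeasure μ]
    (P₂ : Measure (𝒳 × Bool)) [IsProbabilityMeasure P₂]
    (T : Finset (𝒳 × Bool)) (hT : T.Nonempty)
    (hatoms : ∀ p ∈ T, 0 < P₂ {p})
    (hsupp : P₂ ((↑T : Set (𝒳 × Bool))ᶜ) = 0)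
    (P : Measure (𝒳 × Bool))
    (hP : P = (2 : ENNReal)⁻¹ • μ.prod (PMF.uniformOfFintype Bool).toMeasure +
              (2 : ENNReal)⁻¹ • P₂)
    (h : 𝒳 → Bool) (hh : Measurable h) :
    risk P h = 1 / 4 + (1 / 2) * risk P₂ h ∧
    (risk P h < 1 / 4 + (T.inf' hT fun p => (P₂ {p}).toReal) / 2 →
      ∀ p ∈ T, h p.1 = p.2) := by
  set S : Set (𝒳 × Bool) := {p : 𝒳 × Bool | h p.1 ≠ p.2} with hS
  have hmeas : MeasurableSet S := by
    have : S = {p : 𝒳 × Bool | (h p.1, p.2) ∈ {q : Bool × Bool | q.1 ≠ q.2}} := rfl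
    rw [this]
    exact ((hh.comp measurable_fst).prodMk measurable_snd) (Set.Finite.measurableSet (Set.toFinite _))
  -- P₁ of S
  have hP1 : (μ.prod (PMF.uniformOfFintype Bool).toMeasure) S = 2⁻¹ := by
    rw [Measure.prod_apply hmeas]
    have : ∀ x : 𝒳, (PMF.uniformOfFintype Bool).toMeasure (Prod.mk x ⁻¹' S) = 2⁻¹ := by
      intro x
      have hpre : Prod.mk x ⁻¹' S = {!(h x)} := by
        ext b; simp [hS, Set.mem_preimage, Bool.eq_not_iff, eq_comm]
      rw [hpre, PMF.toMeasure_apply_singleton _ _ (measurableSet_singleton _)]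
      simp [PMF.uniformOfFintype_apply]
    simp only [this]
    simp
  have hP2le : P₂ S ≤ 1 := prob_le_one
  have hP2ne : P₂ S ≠ ⊤ := (lt_of_le_of_lt hP2le (by norm_num)).ne
  have hPS : P S = 4⁻¹ + 2⁻¹ * P₂ S := by
    rw [hP]
    simp [Measure.add_apply, Measure.smul_apply, hP1, smul_eq_mul]
    ring_nf
    congr 1
    rw [pow_two, ← ENNReal.mul_inv (by norm_num) (by norm_num)]
    norm_num
  have ha : risk P h = 1 / 4 + (1 / 2) * risk P₂ h := by
    unfold risk
    rw [← hS, hPS, ENNReal.toReal_add (by norm_num) (ENNReal.mul_ne_top (by norm_num) hP2ne),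
      ENNReal.toReal_mul]
    norm_num
  refine ⟨ha, ?_⟩
  intro hlt p hp
  by_contra hne
  set m := T.inf' hT fun p => (P₂ {p}).toReal with hm
  have hrisk2 : risk P₂ h < m := by
    rw [ha] at hlt; linarith
  have hsub : {p} ⊆ S := by
    intro q hq
    simp only [Set.mem_singleton_iff] at hq
    subst hq
    exact hne
  have hle : P₂ {p} ≤ P₂ S := measure_mono hsub
  have : m ≤ risk P₂ h := by
    calc m ≤ (P₂ {p}).toReal := Finset.inf'_le _ hp
    _ ≤ (P₂ S).toReal := ENNReal.toReal_mono hP2ne hle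
  linarith
end

section
/- Let n, m, k be natural numbers, q : (Fin k → ℝ) → (Fin m → ℝ) → ℝ and loss : ℝ → ℝ → ℝ everywhere differentiable functions (jointly in all arguments). For a data point (x, y) ∈ (Fin n → ℝ) × ℝ define Φ_{x,y}(W, θ) = loss (q θ (W.mulVec x)) y on Matrix (Fin m) (Fin n) ℝ × (Fin k → ℝ), and define the gradient-descent step with learning rate η as (W, θ) ↦ (W, θ) − η • ∇Φ_{x,y}(W, θ), where ∇ is the gradient with respect to the standard Euclidean (Frobenius) inner product. Given a dataset d = [(x₁,y₁),…,(x_N,y_N)] and initialization (W₀, θ₀), let (W_t, θ_t) be the iterates obtained by applying the steps for (x₁,y₁),…,(x_t,y_t) in order. Let σ be a permutation of Fin n with permutation matrix P_σ, and let (W'_t, θ'_t) be the iterates on the permuted dataset [(p_σ x₁, y₁),…,(p_σ x_N, y_N)] from initialization (W₀ * P_σᵀ, θ₀). Then for every 0 ≤ t ≤ N, W'_t = W_t * P_σᵀ and θ'_t = θ_t; consequently the trained networks satisfy q θ'_N ((W'_N).mulVec (p_σ x)) = q θ_N (W_N.mulVec x) for every x : Fin n → ℝ. -/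
/-!
The objective of the permuted data point `(P x, y)`, `P` the permutation matrix, is the original
objective precomposed with the linear equivalence `(W, θ) ↦ (W * P, θ)`. The chain rule through a
linear equivalence needs no differentiability (where the objective is not differentiable both sides vanish),
and it multiplies the matrix part of the gradient by `Pᵀ`. As `Pᵀ = P⁻¹`, one gradient step
commutes with `(W, θ) ↦ (W * Pᵀ, θ)`; induction over the dataset propagates this along the whole
trajectory, and `(W * Pᵀ) *ᵥ (P x) = W *ᵥ x` gives the statement about the trained network.
-/

open Matrix

attribute [local instance] Matrix.normedAddCommGroup Matrix.normedSpace

/-- The permutation matrix of `σ : Equiv.Perm (Fin n)`: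
`(permMat n σ) i j = if i = σ j then 1 else 0`. -/
def permMat (n : ℕ) (σ : Equiv.Perm (Fin n)) : Matrix (Fin n) (Fin n) ℝ :=
  Matrix.of fun i j => if i = σ j then 1 else 0

/-- The gradient of `Φ` on `Matrix (Fin m) (Fin n) ℝ × (Fin k → ℝ)` with
respect to the standard Euclidean (Frobenius) inner product: the pair of the
matrix of partial derivatives in the matrix argument and the vector of partial
derivatives in the vector argument. -/
noncomputable def gradPair {m n k : ℕ}
    (Φ : Matrix (Fin m) (Fin n) ℝ × (Fin k → ℝ) → ℝ)
    (p : Matrix (Fin m) (Fin n) ℝ × (Fin k → ℝ)) :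
    Matrix (Fin m) (Fin n) ℝ × (Fin k → ℝ) :=
  (Matrix.of fun i j => fderiv ℝ Φ p (Matrix.single i j 1, 0),
   fun a => fderiv ℝ Φ p (0, Pi.single a 1))

/-- The gradient-descent step with learning rate `η` for the data point
`dat = (x, y)` and the per-example objective
`Φ_{x,y}(W, θ) = loss (q θ (W.mulVec x)) y`. -/
noncomputable def gdStep {m n k : ℕ} (η : ℝ) (loss : ℝ → ℝ → ℝ)
    (q : (Fin k → ℝ) → (Fin m → ℝ) → ℝ)
    (p : Matrix (Fin m) (Fin n) ℝ × (Fin k → ℝ)) (dat : (Fin n → ℝ) × ℝ) :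
    Matrix (Fin m) (Fin n) ℝ × (Fin k → ℝ) :=
  p - η • gradPair (fun s => loss (q s.2 (s.1.mulVec dat.1)) dat.2) p

/-- The iterate after applying the gradient-descent steps for the first `t`
data points of `data`, in order, starting from `init`. -/
noncomputable def gdIter {m n k : ℕ} (η : ℝ) (loss : ℝ → ℝ → ℝ)
    (q : (Fin k → ℝ) → (Fin m → ℝ) → ℝ)
    (init : Matrix (Fin m) (Fin n) ℝ × (Fin k → ℝ))
    (data : List ((Fin n → ℝ) × ℝ)) (t : ℕ) :
    Matrix (Fin m) (Fin n) ℝ × (Fin k → ℝ) :=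
  (data.take t).foldl (gdStep η loss q) init

lemma Matrix.single_one_mul_eq_sum {l m n α : Type*} [DecidableEq l] [DecidableEq m]
    [DecidableEq n] [Fintype m] [Fintype n] [Semiring α] (P : Matrix m n α) (i : l) (j : m) :
    Matrix.single i j (1 : α) * P = ∑ c, P j c • Matrix.single i c 1 := by
  ext a b
  by_cases ha : i = a <;> simp [Matrix.sum_apply, Matrix.single_apply, Matrix.mul_apply, ha]


section

variable {m n k : ℕ}

noncomputable def mulRightFstEquiv (P : (Matrix (Fin n) (Fin n) ℝ)ˣ) :
    (Matrix (Fin m) (Fin n) ℝ × (Fin k → ℝ)) ≃L[ℝ] (Matrix (Fin m) (Fin n) ℝ × (Fin k → ℝ)) :=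
  LinearEquiv.toContinuousLinearEquiv
    { toFun := fun s => (s.1 * (P : Matrix (Fin n) (Fin n) ℝ), s.2)
      invFun := fun s => (s.1 * (↑P⁻¹ : Matrix (Fin n) (Fin n) ℝ), s.2)
      map_add' := fun a b => by simp [Matrix.add_mul]
      map_smul' := fun c a => by simp [Matrix.smul_mul]
      left_inv := fun s => by simp [Matrix.mul_assoc]
      right_inv := fun s => by simp [Matrix.mul_assoc] }

@[simp]
lemma mulRightFstEquiv_apply (P : (Matrix (Fin n) (Fin n) ℝ)ˣ)
    (s : Matrix (Fin m) (Fin n) ℝ × (Fin k → ℝ)) :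
    mulRightFstEquiv P s = (s.1 * (P : Matrix (Fin n) (Fin n) ℝ), s.2) := rfl

lemma gradPair_comp_mul_right (Φ : Matrix (Fin m) (Fin n) ℝ × (Fin k → ℝ) → ℝ)
    {P : Matrix (Fin n) (Fin n) ℝ} (hP : IsUnit P) (p : Matrix (Fin m) (Fin n) ℝ × (Fin k → ℝ)) :
    gradPair (fun s => Φ (s.1 * P, s.2)) p =
      ((gradPair Φ (p.1 * P, p.2)).1 * Pᵀ, (gradPair Φ (p.1 * P, p.2)).2) := by
  have hfderiv : fderiv ℝ (fun s => Φ (s.1 * P, s.2)) p =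
      (fderiv ℝ Φ (p.1 * P, p.2)).comp (mulRightFstEquiv (m := m) (k := k) hP.unit : _ →L[ℝ] _) :=
    (mulRightFstEquiv hP.unit).comp_right_fderiv (f := Φ)
  ext i j
  · have hsum : (Matrix.single i j (1 : ℝ) * P, (0 : Fin k → ℝ)) =
        ∑ l, P j l • (Matrix.single i l (1 : ℝ), (0 : Fin k → ℝ)) := by
      ext <;> simp [single_one_mul_eq_sum, Prod.fst_sum, Prod.snd_sum]
    simp only [gradPair, Matrix.of_apply, hfderiv, ContinuousLinearMap.comp_apply,
      ContinuousLinearEquiv.coe_coe, mulRightFstEquiv_apply, IsUnit.unit_spec, Matrix.zero_mul,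
      hsum, map_sum, map_smul, smul_eq_mul, Matrix.mul_apply, Matrix.transpose_apply, mul_comm]
  · simp [gradPair, hfderiv]

variable (η : ℝ) (loss : ℝ → ℝ → ℝ) (q : (Fin k → ℝ) → (Fin m → ℝ) → ℝ)
  {P : Matrix (Fin n) (Fin n) ℝ}

lemma gdStep_mulVec_of_transpose_mul_self (hP : Pᵀ * P = 1)
    (p : Matrix (Fin m) (Fin n) ℝ × (Fin k → ℝ)) (x : Fin n → ℝ) (y : ℝ) :
    gdStep η loss q (p.1 * Pᵀ, p.2) (P *ᵥ x, y) =
      ((gdStep η loss q p (x, y)).1 * Pᵀ, (gdStep η loss q p (x, y)).2) := by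
  have hgrad := gradPair_comp_mul_right (fun s => loss (q s.2 (s.1 *ᵥ x)) y)
    (IsUnit.of_mul_eq_one_right Pᵀ hP) (p.1 * Pᵀ, p.2)
  simp only [Matrix.mul_assoc, hP, Matrix.mul_one] at hgrad
  simp only [gdStep, Matrix.mulVec_mulVec, hgrad, Prod.mk.eta, Prod.ext_iff, Prod.fst_sub,
    Prod.snd_sub, Prod.smul_fst, Prod.smul_snd, Matrix.sub_mul, Matrix.smul_mul, and_self]

lemma foldl_gdStep_mulVec_of_transpose_mul_self (hP : Pᵀ * P = 1)
    (data : List ((Fin n → ℝ) × ℝ)) (p : Matrix (Fin m) (Fin n) ℝ × (Fin k → ℝ)) :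
    (data.map fun d => (P *ᵥ d.1, d.2)).foldl (gdStep η loss q) (p.1 * Pᵀ, p.2) =
      ((data.foldl (gdStep η loss q) p).1 * Pᵀ, (data.foldl (gdStep η loss q) p).2) := by
  induction data generalizing p with
  | nil => rfl
  | cons d data ih =>
    simp only [List.map_cons, List.foldl_cons, gdStep_mulVec_of_transpose_mul_self η loss q hP, ih]

lemma gdIter_mulVec_of_transpose_mul_self (hP : Pᵀ * P = 1)
    (init : Matrix (Fin m) (Fin n) ℝ × (Fin k → ℝ)) (data : List ((Fin n → ℝ) × ℝ)) (t : ℕ) :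
    gdIter η loss q (init.1 * Pᵀ, init.2) (data.map fun d => (P *ᵥ d.1, d.2)) t =
      ((gdIter η loss q init data t).1 * Pᵀ, (gdIter η loss q init data t).2) := by
  rw [gdIter, ← List.map_take]
  exact foldl_gdStep_mulVec_of_transpose_mul_self η loss q hP _ init

end

lemma permMat_mulVec {n : ℕ} (σ : Equiv.Perm (Fin n)) (x : Fin n → ℝ) :
    permMat n σ *ᵥ x = pcoord n σ x := by
  ext i
  simp [permMat, pcoord, Matrix.mulVec, dotProduct, ← Equiv.symm_apply_eq, ite_mul]

lemma transpose_permMat_mul_self {n : ℕ} (σ : Equiv.Perm (Fin n)) :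
    (permMat n σ)ᵀ * permMat n σ = 1 := by
  ext i j
  simp [permMat, Matrix.mul_apply, Matrix.one_apply, eq_comm]

theorem stmt_15_general (n m k : ℕ)
    (q : (Fin k → ℝ) → (Fin m → ℝ) → ℝ) (loss : ℝ → ℝ → ℝ)
    (η : ℝ) (d : List ((Fin n → ℝ) × ℝ))
    (W₀ : Matrix (Fin m) (Fin n) ℝ) (θ₀ : Fin k → ℝ)
    (σ : Equiv.Perm (Fin n)) :
    (∀ t ≤ d.length,
      gdIter η loss q (W₀ * (permMat n σ)ᵀ, θ₀)
          (d.map fun p => (pcoord n σ p.1, p.2)) t =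
        ((gdIter η loss q (W₀, θ₀) d t).1 * (permMat n σ)ᵀ,
          (gdIter η loss q (W₀, θ₀) d t).2)) ∧
    ∀ x : Fin n → ℝ,
      q (gdIter η loss q (W₀ * (permMat n σ)ᵀ, θ₀)
            (d.map fun p => (pcoord n σ p.1, p.2)) d.length).2
        ((gdIter η loss q (W₀ * (permMat n σ)ᵀ, θ₀)
            (d.map fun p => (pcoord n σ p.1, p.2)) d.length).1.mulVec
          (pcoord n σ x)) =
      q (gdIter η loss q (W₀, θ₀) d d.length).2
        ((gdIter η loss q (W₀, θ₀) d d.length).1.mulVec x) := by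
  have hP := transpose_permMat_mul_self σ
  have hiter : ∀ t, gdIter η loss q (W₀ * (permMat n σ)ᵀ, θ₀)
      (d.map fun p => (pcoord n σ p.1, p.2)) t =
      ((gdIter η loss q (W₀, θ₀) d t).1 * (permMat n σ)ᵀ, (gdIter η loss q (W₀, θ₀) d t).2) := by
    simp only [← permMat_mulVec]
    exact gdIter_mulVec_of_transpose_mul_self η loss q hP (W₀, θ₀) d
  refine ⟨fun t _ => hiter t, fun x => ?_⟩
  rw [hiter, ← permMat_mulVec, Matrix.mulVec_mulVec, Matrix.mul_assoc, hP, Matrix.mul_one]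

/-- equivariance of gradient-descent training under input
coordinate permutations: training on the permuted dataset
`[(p_σ x₁, y₁),…,(p_σ x_N, y_N)]` from the initialization `(W₀ * P_σᵀ, θ₀)`
yields, at every time `0 ≤ t ≤ N`, exactly the conjugated iterates
`(W_t * P_σᵀ, θ_t)`; consequently the trained networks compute the same
function of correspondingly permuted inputs. -/
theorem stmt_15 (n m k : ℕ)
    (q : (Fin k → ℝ) → (Fin m → ℝ) → ℝ) (loss : ℝ → ℝ → ℝ)
    (hq : Differentiable ℝ fun p : (Fin k → ℝ) × (Fin m → ℝ) => q p.1 p.2)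
    (hloss : Differentiable ℝ fun p : ℝ × ℝ => loss p.1 p.2)
    (η : ℝ) (d : List ((Fin n → ℝ) × ℝ))
    (W₀ : Matrix (Fin m) (Fin n) ℝ) (θ₀ : Fin k → ℝ)
    (σ : Equiv.Perm (Fin n)) :
    (∀ t ≤ d.length,
      gdIter η loss q (W₀ * (permMat n σ)ᵀ, θ₀)
          (d.map fun p => (pcoord n σ p.1, p.2)) t =
        ((gdIter η loss q (W₀, θ₀) d t).1 * (permMat n σ)ᵀ,
          (gdIter η loss q (W₀, θ₀) d t).2)) ∧
    ∀ x : Fin n → ℝ,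
      q (gdIter η loss q (W₀ * (permMat n σ)ᵀ, θ₀)
            (d.map fun p => (pcoord n σ p.1, p.2)) d.length).2
        ((gdIter η loss q (W₀ * (permMat n σ)ᵀ, θ₀)
            (d.map fun p => (pcoord n σ p.1, p.2)) d.length).1.mulVec
          (pcoord n σ x)) =
      q (gdIter η loss q (W₀, θ₀) d d.length).2
        ((gdIter η loss q (W₀, θ₀) d d.length).1.mulVec x) :=
  stmt_15_general n m k q loss η d W₀ θ₀ σ
end
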